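/- arXiv:2109.04225 — 3 statements merged into one kernel-verified Lean document; each statement's English description precedes it below -/
import Mathlib

section
/- Suppose the càdlàg path S : [0,T] → ℝ^d satisfies Property (RIE) with respect to p ∈ (2,3) and the nested partitions (P^n)_{n∈ℕ}, with control function w as in condition (c). For each n ∈ ℕ define A^n : Δ_{[0,T]} → ℝ^{d×d} by A^n_{s,t} := ∫ₛᵗ S^n_u ⊗ dS_u − S^n_s ⊗ S_{s,t} (using the Riemann-sum integrals from Property (RIE)). Then there exists a constant C depending only on p such that ‖A^n‖_{p/2,[0,T]} ≤ C w(0,T)^{2/p} for every n ∈ ℕ. -/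
open Set Filter MeasureTheory
open scoped Topology InnerProductSpace BigOperators

noncomputable section

/-- `ℝ^d` with the Euclidean norm. -/
abbrev Vec (d : ℕ) := EuclideanSpace ℝ (Fin d)

/-- `ℝ^{d×d}` with the Euclidean (Frobenius) norm. -/
abbrev Mat (d : ℕ) := EuclideanSpace ℝ (Fin d × Fin d)

def mkVec {d : ℕ} (f : Fin d → ℝ) : Vec d := (WithLp.equiv 2 (Fin d → ℝ)).symm f

def mkMat {d : ℕ} (f : Fin d × Fin d → ℝ) : Mat d := (WithLp.equiv 2 (Fin d × Fin d → ℝ)).symm f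

/-- The tensor product `a ⊗ b` of two vectors, as a `d × d` matrix. -/
def tensor {d : ℕ} (a b : Vec d) : Mat d := mkMat (fun ij => a ij.1 * b ij.2)

/-- A matrix (an element of `L(ℝ^d, ℝ^d)`) applied to a vector. -/
def matApply {d : ℕ} (M : Mat d) (v : Vec d) : Vec d := mkVec (fun i => ∑ j, M (i, j) * v j)

/-- The matrix with `(i,j)` entry `Σ_k A_{ki} B_{kj}`, i.e. `AᵀB`. -/
def matTProd {d : ℕ} (A B : Mat d) : Mat d := mkMat (fun ij => ∑ k, A (k, ij.1) * B (k, ij.2))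

/-- The identity matrix. -/
def idMat {d : ℕ} : Mat d := mkMat (fun ij => if ij.1 = ij.2 then (1 : ℝ) else 0)

/-- The contraction `F' G' 𝕏 := Σ_{k,i,j} F'_{ki} G'_{kj} 𝕏_{ij}`. -/
def ddContract {d : ℕ} (A B X : Mat d) : ℝ := ∑ k, ∑ i, ∑ j, A (k, i) * B (k, j) * X (i, j)

/-- The increment process `(s,t) ↦ X_t - X_s` of a path. -/
def inc {E : Type*} [AddCommGroup E] (X : ℝ → E) : ℝ → ℝ → E := fun s t => X t - X s

/-- A (finite) partition `s = τ_0 < τ_1 < ⋯ < τ_N = t` of the interval `[s,t]`. -/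
structure IntervalPartition (s t : ℝ) where
  N : ℕ
  τ : ℕ → ℝ
  Npos : 0 < N
  first : τ 0 = s
  last : τ N = t
  mono : ∀ k < N, τ k < τ (k + 1)

/-- The mesh of the partition is `< δ`. -/
def IntervalPartition.MeshLt {s t : ℝ} (P : IntervalPartition s t) (δ : ℝ) : Prop :=
  ∀ k < P.N, P.τ (k + 1) - P.τ k < δ

/-- The sum `Σ_{[u,v] ∈ P} |A_{u,v}|^p` along a partition `P`, for a two-parameter
function `A`. -/
def varSumOn {E : Type*} [NormedAddCommGroup E] (p : ℝ) (A : ℝ → ℝ → E)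
    {s t : ℝ} (P : IntervalPartition s t) : ℝ :=
  ∑ k ∈ Finset.range P.N, ‖A (P.τ k) (P.τ (k + 1))‖ ^ p

/-- The set of all sums `Σ_{[u,v] ∈ P} |A_{u,v}|^p` over partitions `P` of `[s,t]`. -/
def pVarSums {E : Type*} [NormedAddCommGroup E] (p : ℝ) (A : ℝ → ℝ → E) (s t : ℝ) : Set ℝ :=
  {x | ∃ P : IntervalPartition s t, x = varSumOn p A P}

/-- The `p`-variation `‖A‖_{p,[s,t]} := (sup_P Σ_{[u,v] ∈ P} |A_{u,v}|^p)^{1/p}` of a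
two-parameter function `A` (for a path `X`, apply this to `inc X`). -/
def pVar {E : Type*} [NormedAddCommGroup E] (p : ℝ) (A : ℝ → ℝ → E) (s t : ℝ) : ℝ :=
  sSup (pVarSums p A s t) ^ (1 / p)

/-- `A` has finite `p`-variation on `[s,t]`. -/
def HasBddPVar {E : Type*} [NormedAddCommGroup E] (p : ℝ) (A : ℝ → ℝ → E) (s t : ℝ) : Prop :=
  BddAbove (pVarSums p A s t)

/-- `f` is càdlàg on `[a,b]`: right-continuous on `[a,b)` with left limits on `(a,b]`. -/
def CadlagOn {E : Type*} [TopologicalSpace E] (f : ℝ → E) (a b : ℝ) : Prop :=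
  (∀ t ∈ Ico a b, Tendsto f (𝓝[>] t) (𝓝 (f t))) ∧
  (∀ t ∈ Ioc a b, ∃ l, Tendsto f (𝓝[<] t) (𝓝 l))

/-- The supremum norm of `f` on `[a,b]`. -/
def supNormOn {E : Type*} [NormedAddCommGroup E] (f : ℝ → E) (a b : ℝ) : ℝ :=
  sSup ((fun u => ‖f u‖) '' Icc a b)

/-- A control function on `Δ_{[0,T]}`: nonnegative and superadditive. -/
def IsControl (T : ℝ) (w : ℝ → ℝ → ℝ) : Prop :=
  (∀ ⦃s t : ℝ⦄, 0 ≤ s → s ≤ t → t ≤ T → 0 ≤ w s t) ∧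
  (∀ ⦃s u t : ℝ⦄, 0 ≤ s → s ≤ u → u ≤ t → t ≤ T → w s u + w u t ≤ w s t)

/-- The set of jump times of `f` in `(0,T]`. -/
def jumpSet {E : Type*} [TopologicalSpace E] (f : ℝ → E) (T : ℝ) : Set ℝ :=
  {u | u ∈ Ioc (0 : ℝ) T ∧ Function.leftLim f u ≠ f u}

/-- A càdlàg `p`-rough path `(X, Z, 𝕏)` over `ℝ^d` on `[0,T]`:
`X, Z ∈ D^p([0,T];ℝ^d)`, `𝕏 ∈ D^{p/2}_2(Δ_{[0,T]};ℝ^{d×d})`, and Chen's relation holds. -/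
structure IsRoughPath (d : ℕ) (p T : ℝ) (X Z : ℝ → Vec d) (XX : ℝ → ℝ → Mat d) : Prop where
  cadlagX : CadlagOn X 0 T
  cadlagZ : CadlagOn Z 0 T
  varX : HasBddPVar p (inc X) 0 T
  varZ : HasBddPVar p (inc Z) 0 T
  cadlagXX₁ : ∀ t ∈ Icc (0 : ℝ) T, CadlagOn (fun s => XX s t) 0 t
  cadlagXX₂ : ∀ s ∈ Icc (0 : ℝ) T, CadlagOn (fun t => XX s t) s T
  varXX : HasBddPVar (p / 2) XX 0 T
  chen : ∀ ⦃s u t : ℝ⦄, 0 ≤ s → s ≤ u → u ≤ t → t ≤ T →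
    XX s t = XX s u + XX u t + tensor (Z u - Z s) (X t - X u)

/-- The remainder `R^F_{s,t} := F_{s,t} - F'_s Z_{s,t}` of a controlled path. -/
def rem {d : ℕ} (Z F : ℝ → Vec d) (F' : ℝ → Mat d) : ℝ → ℝ → Vec d :=
  fun s t => F t - F s - matApply (F' s) (Z t - Z s)

/-- `(F, F')` is a controlled path in `𝒱^{q,r}_Z` on `[0,T]` (with `F ∈ D^p`):
`F ∈ D^p([0,T];ℝ^d)`, `F' ∈ D^q([0,T];L(ℝ^d,ℝ^d))` and `R^F ∈ D^r_2(Δ_{[0,T]};ℝ^d)`. -/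
structure IsControlledPath (d : ℕ) (p q r T : ℝ) (Z : ℝ → Vec d)
    (F : ℝ → Vec d) (F' : ℝ → Mat d) : Prop where
  cadlagF : CadlagOn F 0 T
  varF : HasBddPVar p (inc F) 0 T
  cadlagF' : CadlagOn F' 0 T
  varF' : HasBddPVar q (inc F') 0 T
  cadlagR₁ : ∀ t ∈ Icc (0 : ℝ) T, CadlagOn (fun s => rem Z F F' s t) 0 t
  cadlagR₂ : ∀ s ∈ Icc (0 : ℝ) T, CadlagOn (fun t => rem Z F F' s t) s T
  varR : HasBddPVar r (rem Z F F') 0 T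

/-- The controlled path norm `‖F,F'‖_{𝒱^{q,r}_Z,[0,T]} := |F'_0| + ‖F'‖_q + ‖R^F‖_r`. -/
def ctrlNorm {d : ℕ} (q r T : ℝ) (Z F : ℝ → Vec d) (F' : ℝ → Mat d) : ℝ :=
  ‖F' 0‖ + pVar q (inc F') 0 T + pVar r (rem Z F F') 0 T

/-- Compensated Riemann sum `Σ (⟨F_u, G_{u,v}⟩ + F'_u G'_u 𝕏_{u,v})` along a partition of `[0,t]`. -/
def compSum {d : ℕ} (F : ℝ → Vec d) (F' : ℝ → Mat d) (G : ℝ → Vec d) (G' : ℝ → Mat d)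
    (XX : ℝ → ℝ → Mat d) {t : ℝ} (P : IntervalPartition 0 t) : ℝ :=
  ∑ k ∈ Finset.range P.N,
    (⟪F (P.τ k), G (P.τ (k + 1)) - G (P.τ k)⟫_ℝ
      + ddContract (F' (P.τ k)) (G' (P.τ k)) (XX (P.τ k) (P.τ (k + 1))))

/-- `I` is the value at time `t` of the rough integral `∫₀ᵗ F dG`: the compensated Riemann
sums converge to `I` along every sequence of partitions of `[0,t]` with mesh tending to `0`. -/
def IsRoughIntegralAt {d : ℕ} (F : ℝ → Vec d) (F' : ℝ → Mat d) (G : ℝ → Vec d)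
    (G' : ℝ → Mat d) (XX : ℝ → ℝ → Mat d) (t : ℝ) (I : ℝ) : Prop :=
  ∀ ε > 0, ∃ δ > 0, ∀ P : IntervalPartition 0 t, P.MeshLt δ →
    |compSum F F' G G' XX P - I| < ε

/-- The rough path seminorm `‖X‖_{p,[0,T]} + ‖Z‖_{p,[0,T]} + ‖𝕏‖_{p/2,[0,T]}`. -/
def roughNorm {d : ℕ} (p T : ℝ) (X Z : ℝ → Vec d) (XX : ℝ → ℝ → Mat d) : ℝ :=
  pVar p (inc X) 0 T + pVar p (inc Z) 0 T + pVar (p / 2) XX 0 T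

/-- The rough path distance `‖X − X̃‖_p + ‖Z − Z̃‖_p + ‖𝕏 − 𝕏̃‖_{p/2}`. -/
def roughDist {d : ℕ} (p T : ℝ) (X Z X' Z' : ℝ → Vec d) (XX XX' : ℝ → ℝ → Mat d) : ℝ :=
  pVar p (inc (fun u => X u - X' u)) 0 T + pVar p (inc (fun u => Z u - Z' u)) 0 T
    + pVar (p / 2) (fun s t => XX s t - XX' s t) 0 T

/-- A nested sequence of partitions `P^n = {0 = t^n_0 < t^n_1 < ⋯ < t^n_{N_n} = T}` of `[0,T]`
with vanishing mesh size. -/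
structure PartitionSeq (T : ℝ) where
  N : ℕ → ℕ
  t : ℕ → ℕ → ℝ
  Npos : ∀ n, 0 < N n
  first : ∀ n, t n 0 = 0
  last : ∀ n, t n (N n) = T
  mono : ∀ n, ∀ k < N n, t n k < t n (k + 1)
  nested : ∀ n, ∀ k ≤ N n, ∃ l ≤ N (n + 1), t (n + 1) l = t n k
  mesh : ∀ ε > 0, ∃ M : ℕ, ∀ n ≥ M, ∀ k < N n, t n (k + 1) - t n k < ε

/-- The set `∪_{n ∈ ℕ} P^n` of all partition points. -/
def PartitionSeq.points {T : ℝ} (π : PartitionSeq T) : Set ℝ :=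
  {x | ∃ n, ∃ k ≤ π.N n, π.t n k = x}

/-- The left-point discretization
`S^n_u = S_T 1_{{T}}(u) + Σ_k S_{t^n_k} 1_{[t^n_k, t^n_{k+1})}(u)`. -/
def PartitionSeq.disc {T : ℝ} (π : PartitionSeq T) {E : Type*} [NormedAddCommGroup E]
    (S : ℝ → E) (n : ℕ) (u : ℝ) : E :=
  Set.indicator {T} S u
    + ∑ k ∈ Finset.range (π.N n),
        Set.indicator (Ico (π.t n k) (π.t n (k + 1))) (fun _ => S (π.t n k)) u

/-- The Riemann sum `∫₀ᵘ S^n ⊗ dS := Σ_k S_{t^n_k} ⊗ (S_{t^n_{k+1} ∧ u} - S_{t^n_k ∧ u})`. -/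
def riemannSum {d : ℕ} {T : ℝ} (π : PartitionSeq T) (S : ℝ → Vec d) (n : ℕ) (u : ℝ) : Mat d :=
  ∑ k ∈ Finset.range (π.N n),
    tensor (S (π.t n k)) (S (min (π.t n (k + 1)) u) - S (min (π.t n k) u))

/-- The Riemann sum `∫_{t^n_k}^{t^n_l} S^n ⊗ dS` between two partition points. -/
def riemannBetween {d : ℕ} {T : ℝ} (π : PartitionSeq T) (S : ℝ → Vec d) (n k l : ℕ) : Mat d :=
  ∑ j ∈ Finset.Ico k l, tensor (S (π.t n j)) (S (π.t n (j + 1)) - S (π.t n j))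

/-- Property (RIE) for `S` with respect to `p` and `(P^n)`, with Riemann-sum limit `II` and
control function `w`:  `S` is càdlàg, `S^n → S` uniformly, the Riemann sums `∫₀· S^n ⊗ dS`
converge uniformly to `II`, and `w` dominates `|S_{s,t}|^p` as well as
`|∫_{t^n_k}^{t^n_l} S^n ⊗ dS - S_{t^n_k} ⊗ S_{t^n_k,t^n_l}|^{p/2}`. -/
structure SatisfiesRIE (d : ℕ) (p T : ℝ) (π : PartitionSeq T) (S : ℝ → Vec d)
    (II : ℝ → Mat d) (w : ℝ → ℝ → ℝ) : Prop where
  cadlag : CadlagOn S 0 T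
  discUnif : TendstoUniformlyOn (fun n => π.disc S n) S atTop (Icc 0 T)
  riemannUnif : TendstoUniformlyOn (fun n => riemannSum π S n) II atTop (Icc 0 T)
  control : IsControl T w
  domS : ∀ ⦃s t : ℝ⦄, 0 ≤ s → s ≤ t → t ≤ T → ‖S t - S s‖ ^ p ≤ w s t
  domA : ∀ n : ℕ, ∀ ⦃k l : ℕ⦄, k < l → l ≤ π.N n →
    ‖riemannBetween π S n k l - tensor (S (π.t n k)) (S (π.t n l) - S (π.t n k))‖ ^ (p / 2)
      ≤ w (π.t n k) (π.t n l)

/-- The canonical second-level function `A_{s,t} := ∫ₛᵗ S ⊗ dS - S_s ⊗ S_{s,t}`,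
built from the limit `II = ∫₀· S ⊗ dS` of the Riemann sums in Property (RIE). -/
def roughA {d : ℕ} (S : ℝ → Vec d) (II : ℝ → Mat d) : ℝ → ℝ → Mat d :=
  fun s t => II t - II s - tensor (S s) (S t - S s)

section AuxRIE

variable {T : ℝ} (π : PartitionSeq T) (n : ℕ)
variable {E : Type*} [NormedAddCommGroup E]

lemma tensor_apply {d : ℕ} (a b : Vec d) (ij : Fin d × Fin d) : tensor a b ij = a ij.1 * b ij.2 := rfl


lemma tensor_sub_right {d : ℕ} (a b c : Vec d) : tensor a (b - c) = tensor a b - tensor a c := by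
  ext ij
  simp [tensor_apply, tensor, mkMat, mul_sub]


lemma tensor_sub_left {d : ℕ} (a b c : Vec d) : tensor (a - b) c = tensor a c - tensor b c := by
  ext ij
  simp [tensor, mkMat, sub_mul]


lemma tensor_zero_right {d : ℕ} (a : Vec d) : tensor a (0 : Vec d) = 0 := by
  ext ij; simp [tensor, mkMat]


lemma norm_tensor {d : ℕ} (a b : Vec d) : ‖tensor a b‖ = ‖a‖ * ‖b‖ := by
  rw [EuclideanSpace.norm_eq, EuclideanSpace.norm_eq, EuclideanSpace.norm_eq,
    ← Real.sqrt_mul (by positivity)]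
  congr 1
  rw [Fintype.sum_prod_type, Finset.sum_mul_sum]
  simp [tensor, mkMat, mul_pow, abs_mul, mul_pow]

lemma t_mono : ∀ {k l : ℕ}, k ≤ l → l ≤ π.N n → π.t n k ≤ π.t n l := by
  intro k l hkl hlN
  induction l with
  | zero => simp_all
  | succ m ih =>
    rcases Nat.lt_or_ge k (m+1) with h | h
    · exact le_trans (ih (Nat.lt_succ_iff.mp h) (le_trans (Nat.le_succ m) hlN))
        (le_of_lt (π.mono n m (Nat.lt_of_succ_le hlN)))
    · have : k = m + 1 := le_antisymm hkl h
      simp [this]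


lemma t_nonneg {k : ℕ} (hk : k ≤ π.N n) : 0 ≤ π.t n k := by
  have := t_mono π n (Nat.zero_le k) hk
  rwa [π.first] at this


lemma t_le_T {k : ℕ} (hk : k ≤ π.N n) : π.t n k ≤ T := by
  have := t_mono π n hk (le_refl (π.N n))
  rwa [π.last] at this

/-- index of the largest partition point `≤ u`. -/

def ku (u : ℝ) : ℕ := Nat.findGreatest (fun j => π.t n j ≤ u) (π.N n)


lemma ku_le (u : ℝ) : ku π n u ≤ π.N n := Nat.findGreatest_le _


lemma t_ku_le {u : ℝ} (hu : 0 ≤ u) : π.t n (ku π n u) ≤ u :=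
  Nat.findGreatest_spec (P := fun j => π.t n j ≤ u) (Nat.zero_le _) (by show π.t n 0 ≤ u; rw [π.first]; exact hu)


lemma le_ku {u : ℝ} {j : ℕ} (hj : j ≤ π.N n) (h : π.t n j ≤ u) : j ≤ ku π n u :=
  Nat.le_findGreatest hj h


lemma ku_lt {u : ℝ} (hu : 0 ≤ u) (huT : u < T) : ku π n u < π.N n := by
  rcases lt_or_eq_of_le (ku_le π n u) with h | h
  · exact h
  · exfalso
    have := t_ku_le π n hu
    rw [h, π.last] at this
    linarith


lemma lt_t_ku_succ {u : ℝ} (h : ku π n u < π.N n) : u < π.t n (ku π n u + 1) := by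
  by_contra hc
  push_neg at hc
  have := le_ku π n (Nat.succ_le_of_lt h) hc
  omega


lemma ku_mono {u v : ℝ} (h : u ≤ v) : ku π n u ≤ ku π n v :=
  Nat.findGreatest_mono (fun j hj => le_trans hj h) le_rfl


lemma disc_eq (S : ℝ → E) {u : ℝ} (hu : 0 ≤ u) (huT : u ≤ T) :
    π.disc S n u = S (π.t n (ku π n u)) := by
  rcases eq_or_lt_of_le huT with rfl | huT'
  · have hku : ku π n u = π.N n :=
      le_antisymm (ku_le π n u) (le_ku π n le_rfl (le_of_eq (π.last n)))
    have h0 : ∀ k ∈ Finset.range (π.N n),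
        Set.indicator (Ico (π.t n k) (π.t n (k + 1))) (fun _ => S (π.t n k)) u = 0 := by
      intro k hk
      apply Set.indicator_of_notMem
      rw [Finset.mem_range] at hk
      intro hmem
      exact absurd hmem.2 (not_lt.mpr (t_le_T π n hk))
    rw [PartitionSeq.disc, Finset.sum_eq_zero h0, hku, π.last]
    simp
  · have hklt : ku π n u < π.N n := ku_lt π n hu huT'
    have h1 : Set.indicator ({u_1 : ℝ | u_1 = T} : Set ℝ) S u = 0 := by
      apply Set.indicator_of_notMem
      simp only [mem_setOf_eq]
      exact ne_of_lt huT'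
    rw [PartitionSeq.disc,
      Finset.sum_eq_single_of_mem (ku π n u) (Finset.mem_range.mpr hklt)
        (fun k hk hne => by
          apply Set.indicator_of_notMem
          intro hmem
          rw [Finset.mem_range] at hk
          rcases Nat.lt_or_ge k (ku π n u) with h | h
          · exact absurd hmem.2 (not_lt.mpr (le_trans
              (t_mono π n (Nat.succ_le_of_lt h) (le_trans (ku_le π n u) le_rfl))
              (t_ku_le π n hu)))
          · have : k + 1 ≤ π.N n := hk
            have hk' : ku π n u < k := lt_of_le_of_ne h (Ne.symm hne)
            have : u < π.t n k := lt_of_lt_of_le (lt_t_ku_succ π n hklt)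
              (t_mono π n hk' (Nat.le_of_succ_le hk))
            exact absurd hmem.1 (not_le.mpr this))]
    have hmem : u ∈ Ico (π.t n (ku π n u)) (π.t n (ku π n u + 1)) :=
      ⟨t_ku_le π n hu, lt_t_ku_succ π n hklt⟩
    rw [Set.indicator_of_mem hmem]
    have : Set.indicator ({T} : Set ℝ) S u = 0 :=
      Set.indicator_of_notMem (by simp [ne_of_lt huT']) S
    rw [this, zero_add]


lemma riemannSum_eq {d : ℕ} (S : ℝ → Vec d) {u : ℝ} (hu : 0 ≤ u) (huT : u ≤ T) :
    riemannSum π S n u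
      = riemannBetween π S n 0 (ku π n u)
        + tensor (S (π.t n (ku π n u))) (S u - S (π.t n (ku π n u))) := by
  set k := ku π n u with hk
  have hkN : k ≤ π.N n := ku_le π n u
  have hsplit : riemannSum π S n u
      = (∑ j ∈ Finset.range k,
          tensor (S (π.t n j)) (S (min (π.t n (j + 1)) u) - S (min (π.t n j) u)))
        + ∑ j ∈ Finset.Ico k (π.N n),
          tensor (S (π.t n j)) (S (min (π.t n (j + 1)) u) - S (min (π.t n j) u)) := by
    rw [riemannSum, ← Finset.sum_range_add_sum_Ico _ hkN]
  rw [hsplit]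
  congr 1
  · rw [riemannBetween, Finset.range_eq_Ico]
    apply Finset.sum_congr rfl
    intro j hj
    rw [Finset.mem_Ico] at hj
    have hj1 : π.t n (j + 1) ≤ u := le_trans (t_mono π n hj.2 hkN) (t_ku_le π n hu)
    have hj0 : π.t n j ≤ u := le_trans (t_mono π n (le_trans (Nat.le_succ j) hj.2) hkN) (t_ku_le π n hu)
    rw [min_eq_left hj1, min_eq_left hj0]
  · rcases eq_or_lt_of_le hkN with heq | hlt
    · rw [heq, Finset.Ico_self, Finset.sum_empty]
      have hu' : u = T := le_antisymm huT (by rw [← π.last n, ← heq]; exact t_ku_le π n hu)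
      have ht : π.t n k = T := by rw [heq, π.last]
      rw [hu', π.last n, sub_self, tensor_zero_right]
    · rw [Finset.sum_eq_single_of_mem k (Finset.mem_Ico.mpr ⟨le_rfl, hlt⟩)
        (fun j hj hne => by
          rw [Finset.mem_Ico] at hj
          have hjk : k < j := lt_of_le_of_ne hj.1 (Ne.symm hne)
          have h1 : u ≤ π.t n j := le_trans (le_of_lt (lt_t_ku_succ π n hlt))
            (t_mono π n hjk (le_of_lt hj.2))
          have h2 : u ≤ π.t n (j + 1) := le_trans (le_of_lt (lt_t_ku_succ π n hlt))
            (t_mono π n (Nat.succ_le_succ (le_of_lt hjk)) hj.2)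
          rw [min_eq_right h1, min_eq_right h2, sub_self, tensor_zero_right])]
      rw [min_eq_right (le_of_lt (lt_t_ku_succ π n hlt)), min_eq_left (t_ku_le π n hu)]


lemma riemannBetween_split {d : ℕ} (S : ℝ → Vec d) {k l : ℕ} (h : k ≤ l) :
    riemannBetween π S n 0 l = riemannBetween π S n 0 k + riemannBetween π S n k l := by
  rw [riemannBetween, riemannBetween, riemannBetween,
    Finset.sum_Ico_consecutive _ (Nat.zero_le k) h]


lemma riemannBetween_succ_bot {d : ℕ} (S : ℝ → Vec d) {k l : ℕ} (h : k < l) :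
    riemannBetween π S n k l
      = tensor (S (π.t n k)) (S (π.t n (k + 1)) - S (π.t n k))
        + riemannBetween π S n (k + 1) l := by
  rw [riemannBetween, riemannBetween, Finset.sum_eq_sum_Ico_succ_bot h]


lemma control_mono {T : ℝ} {w : ℝ → ℝ → ℝ} (hw : IsControl T w)
    {s' s t t' : ℝ} (h0 : 0 ≤ s') (h1 : s' ≤ s) (h2 : s ≤ t) (h3 : t ≤ t') (h4 : t' ≤ T) :
    w s t ≤ w s' t' := by
  have hA : w s' s + w s t ≤ w s' t := hw.2 h0 h1 h2 (le_trans h3 h4)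
  have hB : w s' t + w t t' ≤ w s' t' := hw.2 h0 (le_trans h1 h2) h3 h4
  have := hw.1 h0 h1 (le_trans h2 (le_trans h3 h4))
  have := hw.1 (le_trans h0 (le_trans h1 h2)) h3 h4
  linarith


lemma chain_sum {T : ℝ} {w : ℝ → ℝ → ℝ} (hw : IsControl T w) :
    ∀ (M : ℕ) (a b : ℕ → ℝ) (c : ℝ),
      (∀ i < M, 0 ≤ a i ∧ a i ≤ b i ∧ b i ≤ c) →
      (∀ i j, i < j → j < M → b i ≤ a j) →
      0 ≤ c → c ≤ T →
      ∑ i ∈ Finset.range M, w (a i) (b i) ≤ w 0 c := by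
  intro M
  induction M with
  | zero => intro a b c _ _ hc0 hcT; simpa using hw.1 le_rfl hc0 hcT
  | succ M ih =>
    intro a b c hab hchain hc0 hcT
    have hM := hab M (Nat.lt_succ_self M)
    have haM0 : 0 ≤ a M := hM.1
    rw [Finset.sum_range_succ]
    have step1 : ∑ i ∈ Finset.range M, w (a i) (b i) ≤ w 0 (a M) := by
      apply ih a b (a M)
      · intro i hi
        obtain ⟨x, y, z⟩ := hab i (Nat.lt_succ_of_lt hi)
        exact ⟨x, y, hchain i M hi (Nat.lt_succ_self M)⟩
      · intro i j hij hj; exact hchain i j hij (Nat.lt_succ_of_lt hj)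
      · exact haM0
      · exact le_trans (le_trans hM.2.1 hM.2.2) hcT
    have step2 : w 0 (a M) + w (a M) (b M) ≤ w 0 (b M) :=
      hw.2 le_rfl haM0 hM.2.1 (le_trans hM.2.2 hcT)
    have step3 : w 0 (b M) ≤ w 0 c :=
      control_mono hw le_rfl le_rfl (le_trans haM0 hM.2.1) hM.2.2 hcT
    linarith


lemma le_rpow_inv_of_rpow_le {x y e : ℝ} (hx : 0 ≤ x) (he : 0 < e) (h : x ^ e ≤ y) :
    x ≤ y ^ (1 / e) := by
  have : (x ^ e) ^ (1 / e) ≤ y ^ (1 / e) :=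
    Real.rpow_le_rpow (Real.rpow_nonneg hx e) h (by positivity)
  rwa [← Real.rpow_mul hx, mul_one_div_cancel (ne_of_gt he), Real.rpow_one] at this


lemma per_interval {d : ℕ} {p : ℝ} (hp : 2 < p) (hp' : p < 3)
    (S : ℝ → Vec d) (w : ℝ → ℝ → ℝ) (hw : IsControl T w)
    (domS : ∀ ⦃s t : ℝ⦄, 0 ≤ s → s ≤ t → t ≤ T → ‖S t - S s‖ ^ p ≤ w s t)
    (domA : ∀ ⦃k l : ℕ⦄, k < l → l ≤ π.N n →
      ‖riemannBetween π S n k l - tensor (S (π.t n k)) (S (π.t n l) - S (π.t n k))‖ ^ (p / 2)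
        ≤ w (π.t n k) (π.t n l))
    {u v : ℝ} (hu : 0 ≤ u) (huv : u < v) (hv : v ≤ T) :
    ‖riemannSum π S n v - riemannSum π S n u - tensor (π.disc S n u) (S v - S u)‖ ^ (p / 2)
      ≤ 9 * (w (π.t n (ku π n u))
              (if ku π n u < ku π n v then π.t n (ku π n u + 1) else π.t n (ku π n u))
            + w (if ku π n u < ku π n v then π.t n (ku π n u + 1) else v) v) := by
  have hp0 : (0:ℝ) < p := by linarith
  have huT : u ≤ T := le_trans (le_of_lt huv) hv
  have hv0 : 0 ≤ v := le_trans hu (le_of_lt huv)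
  set k := ku π n u with hkdef
  set l := ku π n v with hldef
  have hkl : k ≤ l := ku_mono π n (le_of_lt huv)
  have hkN : k ≤ π.N n := ku_le π n u
  have hlN : l ≤ π.N n := ku_le π n v
  rcases Nat.lt_or_ge k l with hlt | hge
  · -- main case k < l
    rw [if_pos hlt, if_pos hlt]
    have hk1N : k + 1 ≤ π.N n := le_trans (Nat.succ_le_of_lt hlt) hlN
    have htk1l : π.t n (k + 1) ≤ π.t n l := t_mono π n (Nat.succ_le_of_lt hlt) hlN
    have htlv : π.t n l ≤ v := t_ku_le π n hv0
    have htk1v : π.t n (k + 1) ≤ v := le_trans htk1l htlv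
    have htk0 : 0 ≤ π.t n k := t_nonneg π n hkN
    have htk10 : 0 ≤ π.t n (k + 1) := t_nonneg π n hk1N
    have htkk1 : π.t n k ≤ π.t n (k + 1) := t_mono π n (Nat.le_succ k) hk1N
    -- the identity
    have hident : riemannSum π S n v - riemannSum π S n u - tensor (π.disc S n u) (S v - S u)
        = (riemannBetween π S n (k + 1) l
            - tensor (S (π.t n (k + 1))) (S (π.t n l) - S (π.t n (k + 1))))
          + tensor (S (π.t n k) - S (π.t n (k + 1))) (S (π.t n (k + 1)) - S v)
          + tensor (S (π.t n (k + 1)) - S (π.t n l)) (S (π.t n l) - S v) := by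
      rw [disc_eq π n S hu huT, riemannSum_eq π n S hv0 hv, riemannSum_eq π n S hu huT,
        ← hkdef, ← hldef, riemannBetween_split π n S hkl, riemannBetween_succ_bot π n S hlt]
      simp only [tensor_sub_left, tensor_sub_right]
      abel
    set w1 := w (π.t n k) (π.t n (k + 1)) with hw1
    set w2 := w (π.t n (k + 1)) v with hw2
    have hw10 : 0 ≤ w1 := hw.1 htk0 htkk1 (le_trans htk1v hv)
    have hw20 : 0 ≤ w2 := hw.1 htk10 htk1v hv
    set W := w1 + w2 with hW
    have hW0 : 0 ≤ W := by positivity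
    -- bound on B'
    have hB : ‖riemannBetween π S n (k + 1) l
        - tensor (S (π.t n (k + 1))) (S (π.t n l) - S (π.t n (k + 1)))‖ ≤ W ^ (2/p) := by
      have hwle : w (π.t n (k + 1)) (π.t n l) ≤ W := by
        have := control_mono hw htk10 le_rfl htk1l htlv hv
        simp only [hW]; linarith
      rcases Nat.lt_or_ge (k + 1) l with h2 | h2
      · have := domA h2 hlN
        have h3 := le_rpow_inv_of_rpow_le (norm_nonneg _) (by linarith : (0:ℝ) < p/2) this
        rw [one_div_div] at h3
        calc _ ≤ w (π.t n (k + 1)) (π.t n l) ^ (2/p) := h3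
          _ ≤ W ^ (2/p) := Real.rpow_le_rpow (hw.1 htk10 htk1l (le_trans htlv hv)) hwle (by positivity)
      · have hl1 : l = k + 1 := le_antisymm h2 (Nat.succ_le_of_lt hlt)
        rw [hl1, riemannBetween, Finset.Ico_self, Finset.sum_empty, sub_self,
          tensor_zero_right, zero_sub, norm_neg, norm_zero]
        positivity
    -- bounds on the two tensor terms
    have bnd : ∀ ⦃a b : ℝ⦄, 0 ≤ a → a ≤ b → b ≤ T → ‖S b - S a‖ ≤ w a b ^ (1/p) := by
      intro a b h1 h2 h3
      exact le_rpow_inv_of_rpow_le (norm_nonneg _) hp0 (domS h1 h2 h3)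
    have h1 : ‖S (π.t n k) - S (π.t n (k + 1))‖ ≤ W ^ (1/p) := by
      rw [norm_sub_rev]
      calc _ ≤ w1 ^ (1/p) := bnd htk0 htkk1 (le_trans htk1v hv)
        _ ≤ W ^ (1/p) := Real.rpow_le_rpow hw10 (by linarith) (by positivity)
    have h2 : ‖S (π.t n (k + 1)) - S v‖ ≤ W ^ (1/p) := by
      rw [norm_sub_rev]
      calc _ ≤ w2 ^ (1/p) := bnd htk10 htk1v hv
        _ ≤ W ^ (1/p) := Real.rpow_le_rpow hw20 (by linarith) (by positivity)
    have h3 : ‖S (π.t n (k + 1)) - S (π.t n l)‖ ≤ W ^ (1/p) := by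
      rw [norm_sub_rev]
      calc _ ≤ w (π.t n (k + 1)) (π.t n l) ^ (1/p) := bnd htk10 htk1l (le_trans htlv hv)
        _ ≤ W ^ (1/p) := by
          apply Real.rpow_le_rpow (hw.1 htk10 htk1l (le_trans htlv hv)) _ (by positivity)
          have := control_mono hw htk10 le_rfl htk1l htlv hv
          simp only [hW]; linarith
    have h4 : ‖S (π.t n l) - S v‖ ≤ W ^ (1/p) := by
      rw [norm_sub_rev]
      calc _ ≤ w (π.t n l) v ^ (1/p) := bnd (t_nonneg π n hlN) htlv hv
        _ ≤ W ^ (1/p) := by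
          apply Real.rpow_le_rpow (hw.1 (t_nonneg π n hlN) htlv hv) _ (by positivity)
          have := control_mono hw htk10 htk1l htlv le_rfl hv
          simp only [hW]; linarith
    have hWpow : W ^ (1/p) * W ^ (1/p) = W ^ (2/p) := by
      rw [← Real.rpow_add' hW0 (by positivity : (1:ℝ)/p + 1/p ≠ 0)]
      norm_num
      ring_nf
    have hnorm : ‖riemannSum π S n v - riemannSum π S n u - tensor (π.disc S n u) (S v - S u)‖
        ≤ 3 * W ^ (2/p) := by
      rw [hident]
      calc ‖_ + _ + _‖ ≤ _ := norm_add₃_le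
        _ ≤ W ^ (2/p) + W ^ (1/p) * W ^ (1/p) + W ^ (1/p) * W ^ (1/p) := by
          rw [norm_tensor, norm_tensor]
          gcongr <;> first | exact hB | exact h1 | exact h2 | exact h3 | exact h4 | positivity
        _ = 3 * W ^ (2/p) := by rw [hWpow]; ring
    calc ‖riemannSum π S n v - riemannSum π S n u - tensor (π.disc S n u) (S v - S u)‖ ^ (p/2)
        ≤ (3 * W ^ (2/p)) ^ (p/2) :=
          Real.rpow_le_rpow (norm_nonneg _) hnorm (by positivity)
      _ = 3 ^ (p/2) * W := by
          rw [Real.mul_rpow (by norm_num) (Real.rpow_nonneg hW0 _),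
            ← Real.rpow_mul hW0]
          congr 1
          rw [show (2/p) * (p/2) = 1 by field_simp, Real.rpow_one]
      _ ≤ 9 * W := by
          have h9 : (3:ℝ) ^ (p/2) ≤ 9 := by
            calc (3:ℝ) ^ (p/2) ≤ 3 ^ (2:ℝ) :=
              Real.rpow_le_rpow_of_exponent_le (by norm_num) (by linarith)
            _ = 9 := by
              rw [show (2:ℝ) = ((2:ℕ):ℝ) by norm_num, Real.rpow_natCast]; norm_num
          exact mul_le_mul_of_nonneg_right h9 hW0
  · -- degenerate case k = l : the increment vanishes
    have hkeq : k = l := le_antisymm hkl hge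
    rw [if_neg (by omega), if_neg (by omega)]
    have hzero : riemannSum π S n v - riemannSum π S n u - tensor (π.disc S n u) (S v - S u)
        = 0 := by
      rw [disc_eq π n S hu huT, riemannSum_eq π n S hv0 hv, riemannSum_eq π n S hu huT,
        ← hkdef, ← hldef, ← hkeq]
      simp only [tensor_sub_right]
      abel
    rw [hzero, norm_zero, Real.zero_rpow (by positivity : p/2 ≠ 0)]
    have := hw.1 (t_nonneg π n hkN) le_rfl (t_le_T π n hkN)
    have := hw.1 hv0 le_rfl hv
    linarith


lemma tau_mono {s t : ℝ} (P : IntervalPartition s t) :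
    ∀ {k l : ℕ}, k ≤ l → l ≤ P.N → P.τ k ≤ P.τ l := by
  intro k l hkl hlN
  induction l with
  | zero => simp_all
  | succ m ih =>
    rcases Nat.lt_or_ge k (m+1) with h | h
    · exact le_trans (ih (Nat.lt_succ_iff.mp h) (le_trans (Nat.le_succ m) hlN))
        (le_of_lt (P.mono m (Nat.lt_of_succ_le hlN)))
    · have : k = m + 1 := le_antisymm hkl h
      simp [this]


end AuxRIE

/-- **Uniform `p/2`-variation bound on the approximating areas** (Lemma 2.?).
If `S` satisfies Property (RIE) with respect to `p` and `(P^n)`, with control function `w`,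
and `A^n_{s,t} := ∫ₛᵗ S^n ⊗ dS − S^n_s ⊗ S_{s,t}`, then `‖A^n‖_{p/2,[0,T]} ≤ C w(0,T)^{2/p}`
for every `n`, with a constant `C` depending only on `p`. -/
theorem area_approx_uniform_p2var_bound
    (p : ℝ) (hp : 2 < p) (hp' : p < 3) :
    ∃ C : ℝ, 0 < C ∧
      ∀ (d : ℕ) (T : ℝ), 0 < T →
      ∀ (π : PartitionSeq T) (S : ℝ → Vec d) (II : ℝ → Mat d) (w : ℝ → ℝ → ℝ),
        SatisfiesRIE d p T π S II w →
        ∀ n : ℕ,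
          pVar (p / 2)
              (fun s t => riemannSum π S n t - riemannSum π S n s
                            - tensor (π.disc S n s) (S t - S s)) 0 T
            ≤ C * w 0 T ^ (2 / p) := by
  refine ⟨18, by norm_num, ?_⟩
  intro d T hT π S II w hRIE n
  have hw := hRIE.control
  have domS := hRIE.domS
  have domA := hRIE.domA
  have hp0 : (0:ℝ) < p := by linarith
  have hw0T : 0 ≤ w 0 T := hw.1 le_rfl (le_of_lt hT) le_rfl
  set A : ℝ → ℝ → Mat d := fun s t => riemannSum π S n t - riemannSum π S n s
      - tensor (π.disc S n s) (S t - S s) with hA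
  -- every variation sum is bounded by 18 * w 0 T
  have key : ∀ P : IntervalPartition 0 T, varSumOn (p/2) A P ≤ 18 * w 0 T := by
    intro P
    have hτ0 : ∀ i ≤ P.N, 0 ≤ P.τ i := by
      intro i hi
      have := tau_mono P (Nat.zero_le i) hi
      rwa [P.first] at this
    have hτT : ∀ i ≤ P.N, P.τ i ≤ T := by
      intro i hi
      have := tau_mono P hi le_rfl
      rwa [P.last] at this
    -- families of intervals
    set a1 : ℕ → ℝ := fun i => π.t n (ku π n (P.τ i)) with ha1
    set b1 : ℕ → ℝ := fun i =>
      if ku π n (P.τ i) < ku π n (P.τ (i+1)) then π.t n (ku π n (P.τ i) + 1)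
      else π.t n (ku π n (P.τ i)) with hb1
    set a2 : ℕ → ℝ := fun i =>
      if ku π n (P.τ i) < ku π n (P.τ (i+1)) then π.t n (ku π n (P.τ i) + 1)
      else P.τ (i+1) with ha2
    set b2 : ℕ → ℝ := fun i => P.τ (i+1) with hb2
    have step : varSumOn (p/2) A P
        ≤ 9 * ((∑ i ∈ Finset.range P.N, w (a1 i) (b1 i))
              + ∑ i ∈ Finset.range P.N, w (a2 i) (b2 i)) := by
      rw [varSumOn, ← Finset.sum_add_distrib, Finset.mul_sum]
      apply Finset.sum_le_sum
      intro i hi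
      rw [Finset.mem_range] at hi
      exact per_interval π n hp hp' S w hw domS (domA n)
        (hτ0 i (le_of_lt hi)) (P.mono i hi) (hτT (i+1) hi)
    -- facts about indices
    have hfact : ∀ i < P.N, ku π n (P.τ i) ≤ π.N n ∧ π.t n (ku π n (P.τ i)) ≤ P.τ i := by
      intro i hi
      exact ⟨ku_le π n _, t_ku_le π n (hτ0 i (le_of_lt hi))⟩
    have hsum1 : ∑ i ∈ Finset.range P.N, w (a1 i) (b1 i) ≤ w 0 T := by
      apply chain_sum hw P.N a1 b1 T _ _ (le_of_lt hT) le_rfl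
      · intro i hi
        have hkN := ku_le π n (P.τ i)
        refine ⟨t_nonneg π n hkN, ?_, ?_⟩
        · simp only [ha1, hb1]
          split
          · rename_i h
            exact t_mono π n (Nat.le_succ _) (le_trans (Nat.succ_le_of_lt h) (ku_le π n _))
          · exact le_rfl
        · simp only [hb1]
          split
          · rename_i h
            exact t_le_T π n (le_trans (Nat.succ_le_of_lt h) (ku_le π n _))
          · exact t_le_T π n hkN
      · intro i j hij hj
        have hτij : P.τ (i+1) ≤ P.τ j := tau_mono P hij (le_of_lt hj)
        have hτj0 : 0 ≤ P.τ j := hτ0 j (le_of_lt hj)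
        simp only [ha1, hb1]
        split
        · rename_i h
          have h1 : π.t n (ku π n (P.τ i) + 1) ≤ P.τ j := by
            calc π.t n (ku π n (P.τ i) + 1) ≤ π.t n (ku π n (P.τ (i+1))) :=
                t_mono π n (Nat.succ_le_of_lt h) (ku_le π n _)
              _ ≤ P.τ (i+1) := t_ku_le π n (hτ0 (i+1) (le_trans hij (le_of_lt hj)))
              _ ≤ P.τ j := hτij
          have := le_ku π n (le_trans (Nat.succ_le_of_lt h) (ku_le π n _)) h1
          exact t_mono π n this (ku_le π n _)
        · exact t_mono π n (ku_mono π n (le_trans (tau_mono P (Nat.le_succ i) (le_trans hij (le_of_lt hj))) hτij)) (ku_le π n _)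
    have hsum2 : ∑ i ∈ Finset.range P.N, w (a2 i) (b2 i) ≤ w 0 T := by
      apply chain_sum hw P.N a2 b2 T _ _ (le_of_lt hT) le_rfl
      · intro i hi
        refine ⟨?_, ?_, hτT (i+1) hi⟩
        · simp only [ha2]
          split
          · exact t_nonneg π n (le_trans (Nat.succ_le_of_lt (by assumption)) (ku_le π n _))
          · exact hτ0 (i+1) hi
        · simp only [ha2, hb2]
          split
          · rename_i h
            calc π.t n (ku π n (P.τ i) + 1) ≤ π.t n (ku π n (P.τ (i+1))) :=
                t_mono π n (Nat.succ_le_of_lt h) (ku_le π n _)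
              _ ≤ P.τ (i+1) := t_ku_le π n (hτ0 (i+1) hi)
          · exact le_rfl
      · intro i j hij hj
        have hτij : P.τ (i+1) ≤ P.τ j := tau_mono P hij (le_of_lt hj)
        simp only [ha2, hb2]
        split
        · rename_i h
          have hkjN : ku π n (P.τ j) < π.N n := lt_of_lt_of_le h (ku_le π n _)
          exact le_trans hτij (le_of_lt (lt_t_ku_succ π n hkjN))
        · exact le_trans hτij (tau_mono P (Nat.le_succ j) hj)
    calc varSumOn (p/2) A P ≤ 9 * (_ + _) := step
      _ ≤ 9 * (w 0 T + w 0 T) := by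
          apply mul_le_mul_of_nonneg_left (add_le_add hsum1 hsum2) (by norm_num)
      _ = 18 * w 0 T := by ring
  -- conclude
  have hnn : ∀ x ∈ pVarSums (p/2) A 0 T, 0 ≤ x := by
    rintro x ⟨P, rfl⟩
    exact Finset.sum_nonneg fun i _ => Real.rpow_nonneg (norm_nonneg _) _
  have hsup : sSup (pVarSums (p/2) A 0 T) ≤ 18 * w 0 T :=
    Real.sSup_le (fun x ⟨P, hP⟩ => hP ▸ key P) (by linarith)
  have hsup0 : 0 ≤ sSup (pVarSums (p/2) A 0 T) := Real.sSup_nonneg hnn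
  rw [pVar]
  calc sSup (pVarSums (p/2) A 0 T) ^ (1 / (p/2))
      ≤ (18 * w 0 T) ^ (1 / (p/2)) := Real.rpow_le_rpow hsup0 hsup (by positivity)
    _ = (18 * w 0 T) ^ (2/p) := by rw [one_div_div]
    _ = 18 ^ (2/p) * w 0 T ^ (2/p) := Real.mul_rpow (by norm_num) hw0T
    _ ≤ 18 * w 0 T ^ (2/p) := by
        apply mul_le_mul_of_nonneg_right _ (Real.rpow_nonneg hw0T _)
        calc (18:ℝ) ^ (2/p) ≤ 18 ^ (1:ℝ) :=
            Real.rpow_le_rpow_of_exponent_le (by norm_num) (by rw [div_le_one hp0]; linarith)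
          _ = 18 := Real.rpow_one _
end
end

section
/- Let P^n = {0 = t^n_0 < t^n_1 < ⋯ < t^n_{N_n} = T}, n ∈ ℕ, be a nested sequence of partitions of [0,T] (P^n ⊆ P^{n+1}) with mesh |P^n| → 0, let F : [0,T] → ℝ^d be càdlàg, and define F^n_t := F_T·1_{{T}}(t) + Σ_{k=0}^{N_n−1} F_{t^n_k}·1_{[t^n_k,t^n_{k+1})}(t). Let J_F := {t ∈ (0,T] : F_{t−} ≠ F_t} be the set of jump times of F. Then the following are equivalent: (i) J_F ⊆ ∪_{n∈ℕ} P^n; (ii) the sequence (F^n)_{n∈ℕ} converges pointwise to F on [0,T]; (iii) the sequence (F^n)_{n∈ℕ} converges uniformly to F on [0,T]. -/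
open Set Filter MeasureTheory
open scoped Topology InnerProductSpace BigOperators

noncomputable section

/-! Write `F^n_u = F (p_n u)`, where `p_n u = π.prev n u` is the last point of `P^n` not exceeding
`u`, so that `p_n u ≤ u < p_n u + |P^n|`. At a point `u ∉ ⋃ P^n` the points `p_n u` converge to `u`
from below, hence `F^n_u → F_{u-}`; this gives (ii) ⇒ (i). Conversely, near any `v ∈ [0,T]` a càdlàg
path is uniformly close to `F_{v-}` left of `v` and to `F_v` from `v` on. If `v ∈ ⋃ P^n`, then for
large `n` the points `u` and `p_n u` lie on the same side of `v`; otherwise `v` is not a jump and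
the two one-sided values agree. So `F^n → F` locally uniformly on `[0,T]`, hence uniformly by
compactness. -/

section Cadlag

variable {a b v : ℝ}

theorem CadlagOn.tendsto_leftLim {E : Type*} [TopologicalSpace E] [T2Space E] {F : ℝ → E}
    (hF : CadlagOn F a b) (hv : v ∈ Ioc a b) :
    Tendsto F (𝓝[<] v) (𝓝 (Function.leftLim F v)) := by
  obtain ⟨l, hl⟩ := hF.2 v hv
  rwa [leftLim_eq_of_tendsto hl]

theorem CadlagOn.tendsto_nhdsWithin_Icc {E : Type*} [TopologicalSpace E] {F : ℝ → E}
    (hF : CadlagOn F a b) (hv : v ∈ Icc a b) :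
    Tendsto F (𝓝[Icc v b] v) (𝓝 (F v)) := by
  rw [← Ioc_insert_left hv.2, nhdsWithin_insert]
  refine tendsto_sup.2 ⟨tendsto_pure_nhds F v, ?_⟩
  rcases hv.2.eq_or_lt with rfl | hvb
  · simp
  · exact (hF.1 v ⟨hv.1, hvb⟩).mono_left (nhdsWithin_mono _ Ioc_subset_Ioi_self)

theorem CadlagOn.tendsto_dist_ite_leftLim {E : Type*} [MetricSpace E] {F : ℝ → E}
    (hF : CadlagOn F a b) (hv : v ∈ Icc a b) :
    Tendsto (fun x => dist (F x) (if x < v then Function.leftLim F v else F v))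
      (𝓝[Icc a b] v) (𝓝 0) := by
  rw [← Ico_union_Icc_eq_Icc hv.1 hv.2, nhdsWithin_union, tendsto_sup]
  constructor
  · rcases hv.1.eq_or_lt with rfl | hav
    · simp
    · have hleft : Tendsto F (𝓝[Ico a v] v) (𝓝 (Function.leftLim F v)) :=
        (hF.tendsto_leftLim ⟨hav, hv.2⟩).mono_left (nhdsWithin_mono _ Ico_subset_Iio_self)
      replace hleft := hleft.dist (tendsto_const_nhds (x := Function.leftLim F v))
      rw [dist_self] at hleft
      exact hleft.congr' (eventually_nhdsWithin_of_forall fun x hx => by simp [hx.2])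
  · have hright := (hF.tendsto_nhdsWithin_Icc hv).dist (tendsto_const_nhds (x := F v))
    rw [dist_self] at hright
    exact hright.congr' (eventually_nhdsWithin_of_forall fun x hx => by
      simp [not_lt.2 hx.1])

end Cadlag

namespace PartitionSeq

variable {T : ℝ} (π : PartitionSeq T) {n k : ℕ} {u : ℝ}

theorem strictMonoOn_t (n : ℕ) : StrictMonoOn (π.t n) (Iic (π.N n)) :=
  strictMonoOn_Iic_of_lt_succ fun k hk => π.mono n k hk

theorem t_le_t {l : ℕ} (hkl : k ≤ l) (hl : l ≤ π.N n) : π.t n k ≤ π.t n l :=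
  (π.strictMonoOn_t n).monotoneOn (mem_Iic.2 (hkl.trans hl)) (mem_Iic.2 hl) hkl

theorem t_mem_Icc (hk : k ≤ π.N n) : π.t n k ∈ Icc 0 T :=
  ⟨(π.first n).ge.trans (π.t_le_t k.zero_le hk), (π.t_le_t hk le_rfl).trans (π.last n).le⟩

theorem zero_mem_points : (0 : ℝ) ∈ π.points :=
  ⟨0, 0, Nat.zero_le _, π.first 0⟩

theorem T_mem_points : T ∈ π.points :=
  ⟨0, π.N 0, le_rfl, π.last 0⟩

theorem eventually_mem_partition {x : ℝ} (hx : x ∈ π.points) :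
    ∀ᶠ n in atTop, ∃ k ≤ π.N n, π.t n k = x := by
  obtain ⟨m, k, hk, rfl⟩ := hx
  refine eventually_atTop.2 ⟨m, fun n hn => ?_⟩
  induction n, hn using Nat.le_induction with
  | base => exact ⟨k, hk, rfl⟩
  | succ n _ ih =>
    obtain ⟨l, hl, hlk⟩ := ih
    obtain ⟨l', hl', hl'l⟩ := π.nested n l hl
    exact ⟨l', hl', hl'l.trans hlk⟩

def idx (n : ℕ) (u : ℝ) : ℕ :=
  Nat.findGreatest (fun k => π.t n k ≤ u) (π.N n)

def prev (n : ℕ) (u : ℝ) : ℝ :=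
  π.t n (π.idx n u)

theorem idx_le (n : ℕ) (u : ℝ) : π.idx n u ≤ π.N n :=
  Nat.findGreatest_le _

theorem idx_lt (hu : u < T) : π.idx n u < π.N n := by
  refine (π.idx_le n u).lt_of_ne fun h => ?_
  have hN : π.t n (π.N n) ≤ u := h ▸ Nat.findGreatest_of_ne_zero h (π.Npos n).ne'
  exact (hu.trans_le (π.last n ▸ hN)).false

theorem prev_mem_Icc : π.prev n u ∈ Icc 0 T :=
  π.t_mem_Icc (π.idx_le n u)

theorem prev_le (hu : 0 ≤ u) : π.prev n u ≤ u :=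
  Nat.findGreatest_spec (P := fun k => π.t n k ≤ u) (Nat.zero_le _) (π.first n ▸ hu)

theorem t_le_prev (hk : k ≤ π.N n) (h : π.t n k ≤ u) : π.t n k ≤ π.prev n u :=
  π.t_le_t (Nat.le_findGreatest hk h) (π.idx_le n u)

theorem lt_t_idx_succ (hu : u < T) : u < π.t n (π.idx n u + 1) :=
  not_le.1 (Nat.findGreatest_is_greatest (Nat.lt_succ_self _) (π.idx_lt hu))

theorem prev_T : π.prev n T = T := by
  rw [prev, idx, Nat.findGreatest_eq (by rw [π.last])]
  exact π.last n

theorem disc_eq_prev {E : Type*} [NormedAddCommGroup E] (S : ℝ → E) (n : ℕ)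
    (hu : u ∈ Icc 0 T) : π.disc S n u = S (π.prev n u) := by
  unfold disc
  rcases hu.2.eq_or_lt with rfl | huT
  · rw [π.prev_T, indicator_of_mem (mem_singleton _), Finset.sum_eq_zero, add_zero]
    intro k hk
    exact indicator_of_notMem
      (fun h => (h.2.trans_le (π.t_mem_Icc (Finset.mem_range.1 hk)).2).false) _
  rw [indicator_of_notMem (notMem_singleton_iff.2 huT.ne), zero_add,
    Finset.sum_eq_single_of_mem _ (Finset.mem_range.2 (π.idx_lt huT))]
  · exact indicator_of_mem (show u ∈ Ico _ _ from ⟨π.prev_le hu.1, π.lt_t_idx_succ huT⟩) _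
  · rintro k hk hne
    refine indicator_of_notMem (fun h => hne ?_) _
    have hk_le : k ≤ π.idx n u := Nat.le_findGreatest (Finset.mem_range.1 hk).le h.1
    have hidx_lt : π.idx n u < k + 1 := by
      by_contra! hle
      exact (h.2.trans_le ((π.t_le_t hle (π.idx_le n u)).trans (π.prev_le hu.1))).false
    omega

theorem eventually_sub_prev_lt {δ : ℝ} (hδ : 0 < δ) :
    ∀ᶠ n in atTop, ∀ u ∈ Icc 0 T, u - π.prev n u < δ := by
  obtain ⟨M, hM⟩ := π.mesh δ hδ
  refine eventually_atTop.2 ⟨M, fun n hn u hu => ?_⟩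
  rcases hu.2.eq_or_lt with rfl | huT
  · simpa [π.prev_T] using hδ
  · have := hM n hn _ (π.idx_lt huT)
    have := π.lt_t_idx_succ (n := n) huT
    rw [prev]
    linarith

theorem tendsto_prev {v : ℝ} :
    Tendsto (fun q : ℕ × ℝ => π.prev q.1 q.2) (atTop ×ˢ 𝓝[Icc 0 T] v) (𝓝[Icc 0 T] v) := by
  refine tendsto_nhdsWithin_iff.2 ⟨?_, Eventually.of_forall fun q => π.prev_mem_Icc⟩
  have hgap : Tendsto (fun q : ℕ × ℝ => q.2 - π.prev q.1 q.2) (atTop ×ˢ 𝓝[Icc 0 T] v) (𝓝 0) := by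
    refine Metric.tendsto_nhds.2 fun δ hδ => ?_
    filter_upwards [(π.eventually_sub_prev_lt hδ).prod_mk self_mem_nhdsWithin]
      with q ⟨hgap, hq⟩
    rw [Real.dist_0_eq_abs, abs_of_nonneg (sub_nonneg.2 (π.prev_le hq.1))]
    exact hgap q.2 hq
  simpa using ((tendsto_snd.mono_right nhdsWithin_le_nhds).sub hgap)

theorem eventually_prev_lt_iff {x : ℝ} (hx : x ∈ π.points) :
    ∀ᶠ n in atTop, ∀ u, 0 ≤ u → (π.prev n u < x ↔ u < x) := by
  filter_upwards [π.eventually_mem_partition hx] with n ⟨k, hk, hkx⟩ u hu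
  refine ⟨fun h => not_le.1 fun hxu => h.not_ge ?_, fun h => (π.prev_le hu).trans_lt h⟩
  exact hkx ▸ π.t_le_prev hk (hkx ▸ hxu)

theorem tendsto_disc_leftLim {E : Type*} [NormedAddCommGroup E] {S : ℝ → E}
    (hS : CadlagOn S 0 T) (hu : u ∈ Ioo 0 T) (hp : u ∉ π.points) :
    Tendsto (fun n => π.disc S n u) atTop (𝓝 (Function.leftLim S u)) := by
  have huIcc : u ∈ Icc 0 T := Ioo_subset_Icc_self hu
  have hpair : Tendsto (fun n : ℕ => (n, u)) atTop (atTop ×ˢ 𝓝[Icc 0 T] u) :=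
    tendsto_id.prodMk (tendsto_nhdsWithin_iff.2 ⟨tendsto_const_nhds, .of_forall fun _ => huIcc⟩)
  have hprev : Tendsto (fun n => π.prev n u) atTop (𝓝[<] u) :=
    tendsto_nhdsWithin_iff.2 ⟨(π.tendsto_prev.comp hpair).mono_right nhdsWithin_le_nhds,
      .of_forall fun n => (π.prev_le hu.1.le).lt_of_ne fun h => hp ⟨n, _, π.idx_le n u, h⟩⟩
  exact ((hS.tendsto_leftLim (Ioo_subset_Ioc_self hu)).comp hprev).congr fun n =>
    (π.disc_eq_prev S n huIcc).symm

variable {E : Type*} [NormedAddCommGroup E] {F : ℝ → E}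

theorem jumpSet_subset_points_of_tendsto_disc (hF : CadlagOn F 0 T)
    (h : ∀ t ∈ Icc (0 : ℝ) T, Tendsto (fun n => π.disc F n t) atTop (𝓝 (F t))) :
    jumpSet F T ⊆ π.points := by
  rintro u ⟨hu, hjump⟩
  by_contra hp
  have huT : u < T := hu.2.lt_of_ne fun h => hp (h ▸ π.T_mem_points)
  exact hjump (tendsto_nhds_unique (π.tendsto_disc_leftLim hF ⟨hu.1, huT⟩ hp)
    (h u (Ioc_subset_Icc_self hu)))

theorem tendstoUniformlyOn_disc (hF : CadlagOn F 0 T) (hJ : jumpSet F T ⊆ π.points) :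
    TendstoUniformlyOn (π.disc F) F atTop (Icc 0 T) := by
  rw [← tendstoLocallyUniformlyOn_iff_tendstoUniformlyOn_of_compact isCompact_Icc,
    tendstoLocallyUniformlyOn_iff_filter]
  intro v hv
  set g : ℝ → E := fun x => if x < v then Function.leftLim F v else F v
  have hside : ∀ᶠ q : ℕ × ℝ in atTop ×ˢ 𝓝[Icc 0 T] v, g (π.prev q.1 q.2) = g q.2 := by
    by_cases hvp : v ∈ π.points
    · filter_upwards [(π.eventually_prev_lt_iff hvp).prod_inl _,
        (eventually_mem_nhdsWithin (s := Icc 0 T) (a := v)).prod_inr _] with q hq hq2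
      simp only [g, hq q.2 hq2.1]
    · have hv0 : 0 < v := hv.1.lt_of_ne fun h => hvp (h ▸ π.zero_mem_points)
      have hcont : Function.leftLim F v = F v := not_not.1 fun h => hvp (hJ ⟨⟨hv0, hv.2⟩, h⟩)
      exact .of_forall fun q => by simp only [g, hcont, ite_self]
  have hy := (hF.tendsto_dist_ite_leftLim hv).comp (tendsto_snd (f := (atTop : Filter ℕ)))
  have hprev := (hF.tendsto_dist_ite_leftLim hv).comp π.tendsto_prev
  refine Metric.tendstoUniformlyOnFilter_iff.2 fun ε hε => ?_
  filter_upwards [hy (Iio_mem_nhds (half_pos hε)), hprev (Iio_mem_nhds (half_pos hε)), hside,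
    (eventually_mem_nhdsWithin (s := Icc 0 T) (a := v)).prod_inr _] with q hq₁ hq₂ hq₃ hq₄
  rw [π.disc_eq_prev F q.1 hq₄]
  calc dist (F q.2) (F (π.prev q.1 q.2))
      ≤ dist (F q.2) (g q.2) + dist (F (π.prev q.1 q.2)) (g (π.prev q.1 q.2)) := by
        rw [hq₃]; exact dist_triangle_right _ _ _
    _ < ε / 2 + ε / 2 := add_lt_add hq₁ hq₂
    _ = ε := add_halves ε

end PartitionSeq

theorem discretization_convergence_tfae_general
    (d : ℕ) (T : ℝ) (π : PartitionSeq T) (F : ℝ → Vec d)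
    (hF : CadlagOn F 0 T) :
    ((jumpSet F T ⊆ π.points) ↔
        (∀ t ∈ Icc (0 : ℝ) T, Tendsto (fun n => π.disc F n t) atTop (𝓝 (F t)))) ∧
    ((∀ t ∈ Icc (0 : ℝ) T, Tendsto (fun n => π.disc F n t) atTop (𝓝 (F t))) ↔
        TendstoUniformlyOn (fun n => π.disc F n) F atTop (Icc 0 T)) := by
  have uniform_of_jumps := π.tendstoUniformlyOn_disc hF
  have jumps_of_pointwise := π.jumpSet_subset_points_of_tendsto_disc hF
  have pointwise_of_uniform :
      TendstoUniformlyOn (fun n => π.disc F n) F atTop (Icc 0 T) →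
        ∀ t ∈ Icc (0 : ℝ) T, Tendsto (fun n => π.disc F n t) atTop (𝓝 (F t)) :=
    fun h _ ht => h.tendsto_at ht
  exact ⟨⟨fun h => pointwise_of_uniform (uniform_of_jumps h), jumps_of_pointwise⟩,
    ⟨fun h => uniform_of_jumps (jumps_of_pointwise h), pointwise_of_uniform⟩⟩

/-- **Pointwise/uniform convergence of the left-point discretizations** (Proposition 2.?).
For a càdlàg path `F` and a nested sequence of partitions with vanishing mesh, the
following are equivalent: (i) `J_F ⊆ ∪_n P^n`; (ii) `F^n → F` pointwise on `[0,T]`;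
(iii) `F^n → F` uniformly on `[0,T]`. -/
theorem discretization_convergence_tfae
    (d : ℕ) (T : ℝ) (hT : 0 < T) (π : PartitionSeq T) (F : ℝ → Vec d)
    (hF : CadlagOn F 0 T) :
    ((jumpSet F T ⊆ π.points) ↔
        (∀ t ∈ Icc (0 : ℝ) T, Tendsto (fun n => π.disc F n t) atTop (𝓝 (F t)))) ∧
    ((∀ t ∈ Icc (0 : ℝ) T, Tendsto (fun n => π.disc F n t) atTop (𝓝 (F t))) ↔
        TendstoUniformlyOn (fun n => π.disc F n) F atTop (Icc 0 T)) :=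
  discretization_convergence_tfae_general d T π F hF
end
end

section
/- Let p ∈ (2,3), q ≥ p with 2/p + 1/q > 1, and r with 1/r = 1/p + 1/q. Let S ∈ D^p([0,T];ℝ^d), let (F,F') ∈ 𝒱^{q,r}_S be a controlled path with remainder R, and let P^n = {0 = t^n_0 < ⋯ < t^n_{N_n} = T}, n ∈ ℕ, be partitions of [0,T]. Define the discretizations S^n_t := S_T·1_{{T}}(t) + Σ_k S_{t^n_k}·1_{[t^n_k,t^n_{k+1})}(t) and F^n_t := F_T·1_{{T}}(t) + Σ_k F_{t^n_k}·1_{[t^n_k,t^n_{k+1})}(t), and set R^n_{s,t} := F^n_{s,t} − F'_s S^n_{s,t} for (s,t) ∈ Δ_{[0,T]}. Then there exists a constant C depending only on p, q and r such that, for every n ∈ ℕ and every finite partition P of [0,T], Σ_{[s,t]∈P} |R^n_{s,t}|^r ≤ C(‖R‖_{r,[0,T]}^r + ‖F'‖_{q,[0,T]}^q + ‖S‖_{p,[0,T]}^p); in particular ‖R^n‖_{r,[0,T]} is bounded uniformly in n. -/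
open Set Filter MeasureTheory
open scoped Topology InnerProductSpace BigOperators

noncomputable section

/-- Left-point discretization of `S` along a single partition of `[a,b]`. -/
def IntervalPartition.disc {a b : ℝ} (P : IntervalPartition a b) {E : Type*}
    [NormedAddCommGroup E] (S : ℝ → E) (u : ℝ) : E :=
  Set.indicator {b} S u
    + ∑ k ∈ Finset.range P.N,
        Set.indicator (Ico (P.τ k) (P.τ (k + 1))) (fun _ => S (P.τ k)) u

/-!
Let `λ` send `u` to the left endpoint of the interval of `P^n` containing it. On `[0,T]` the
discretizations are `F ∘ λ` and `S ∘ λ`, so `R^n_{s,t} = R_{λs,λt} + (F'_{λs} - F'_s) S_{λs,λt}`.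
The correction vanishes unless `λs < λt`, and then `λs ≤ s < λt`; Young's inequality for
`1/r = 1/p + 1/q` bounds its `r`-th power by `|F'_{λs,s}|^q + |S_{λs,λt}|^p`. Along a partition
`(τ_k)` of `[0,T]` the points `λτ_k` form a monotone chain and the `τ_k` interlace it, so the three
resulting sums are bounded by the `r`-, `q`- and `p`-variations of `R`, `F'` and `S`; `C = 2^r`.
-/

namespace IntervalPartition

variable {a b : ℝ} (P : IntervalPartition a b)

lemma τ_mono {j k : ℕ} (hjk : j ≤ k) (hk : k ≤ P.N) : P.τ j ≤ P.τ k :=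
  (strictMonoOn_Iic_of_lt_succ fun m hm => by simpa using P.mono m hm).monotoneOn
    (mem_Iic.2 (hjk.trans hk)) (mem_Iic.2 hk) hjk

lemma τ_mem_Icc {k : ℕ} (hk : k ≤ P.N) : P.τ k ∈ Icc a b :=
  ⟨P.first.symm.trans_le (P.τ_mono k.zero_le hk), (P.τ_mono hk le_rfl).trans_eq P.last⟩

def floorIdx (u : ℝ) : ℕ := Nat.findGreatest (fun k => P.τ k ≤ u) P.N

/-- The largest partition point `≤ u` (and `a` when `u < a`). -/
def floor (u : ℝ) : ℝ := P.τ (P.floorIdx u)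

lemma floorIdx_le (u : ℝ) : P.floorIdx u ≤ P.N := Nat.findGreatest_le _

lemma floor_le {u : ℝ} (hu : a ≤ u) : P.floor u ≤ u :=
  Nat.findGreatest_spec (P := fun k => P.τ k ≤ u) (Nat.zero_le _) (by rwa [P.first])

lemma left_le_floor (u : ℝ) : a ≤ P.floor u := (P.τ_mem_Icc (P.floorIdx_le u)).1

lemma floor_mono : Monotone P.floor := fun _ _ huv =>
  P.τ_mono (Nat.findGreatest_mono (fun _ h => h.trans huv) le_rfl) (P.floorIdx_le _)

lemma floor_left : P.floor a = a := le_antisymm (P.floor_le le_rfl) (P.left_le_floor a)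

lemma floor_right : P.floor b = b := by
  have : P.floorIdx b = P.N :=
    le_antisymm (P.floorIdx_le b) (Nat.le_findGreatest le_rfl (by simp [P.last]))
  rw [floor, this, P.last]

lemma lt_floor_of_floor_lt {u v : ℝ} (h : P.floor u < P.floor v) : u < P.floor v := by
  by_contra! hvu
  exact h.not_ge (P.τ_mono (Nat.le_findGreatest (P.floorIdx_le v) hvu) (P.floorIdx_le u))

lemma floorIdx_lt {u : ℝ} (hu : u < b) : P.floorIdx u < P.N := by
  refine (P.floorIdx_le u).lt_of_ne fun h => ?_
  have := Nat.findGreatest_of_ne_zero h P.Npos.ne'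
  rw [P.last] at this
  exact hu.not_ge this

lemma mem_Ico_τ_iff {u : ℝ} (hu : u ∈ Ico a b) {k : ℕ} (hk : k < P.N) :
    u ∈ Ico (P.τ k) (P.τ (k + 1)) ↔ P.floorIdx u = k := by
  constructor
  · rintro ⟨hku, huk⟩
    have hle : k ≤ P.floorIdx u := Nat.le_findGreatest hk.le hku
    have hlt : P.floorIdx u < k + 1 := by
      by_contra! h
      exact huk.not_ge ((P.τ_mono h (P.floorIdx_le u)).trans (P.floor_le hu.1))
    omega
  · rintro rfl
    exact ⟨P.floor_le hu.1, not_le.1 (Nat.findGreatest_is_greatest (Nat.lt_succ_self _) hk)⟩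

lemma disc_eq_comp_floor {E : Type*} [NormedAddCommGroup E] (S : ℝ → E) {u : ℝ}
    (hu : u ∈ Icc a b) : P.disc S u = S (P.floor u) := by
  rcases hu.2.eq_or_lt with rfl | hub
  · have : ∀ k ∈ Finset.range P.N,
        (Ico (P.τ k) (P.τ (k + 1))).indicator (fun _ => S (P.τ k)) u = 0 := fun k hk =>
      indicator_of_notMem (fun h => h.2.not_ge (P.τ_mem_Icc (Finset.mem_range.1 hk)).2) _
    simp [disc, Finset.sum_eq_zero this, floor_right]
  · have : ∀ k ∈ Finset.range P.N,
        (Ico (P.τ k) (P.τ (k + 1))).indicator (fun _ => S (P.τ k)) u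
          = if P.floorIdx u = k then S (P.τ k) else 0 := fun k hk => by
      simp only [indicator, P.mem_Ico_τ_iff ⟨hu.1, hub⟩ (Finset.mem_range.1 hk)]
    rw [disc, Finset.sum_congr rfl this, Finset.sum_ite_eq,
      if_pos (Finset.mem_range.2 (P.floorIdx_lt hub)),
      indicator_of_notMem (by simpa using hub.ne), zero_add, floor]

end IntervalPartition

lemma sum_range_pred_eq_of_step_eq {α β : Type*} [AddCommMonoid β] {g : α → α → β}
    (hg : ∀ x, g x x = 0) {c c' : ℕ → α} {k M : ℕ} (hkM : k < M) (hk : c k = c (k + 1))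
    (hc' : ∀ j, c' j = c (if j < k then j else j + 1)) :
    ∑ j ∈ Finset.range (M - 1), g (c' j) (c' (j + 1))
      = ∑ j ∈ Finset.range M, g (c j) (c (j + 1)) := by
  obtain ⟨m, rfl⟩ : ∃ m, M = k + 1 + m := ⟨M - (k + 1), by omega⟩
  rw [show k + 1 + m - 1 = k + m by omega, Finset.sum_range_add, Finset.sum_range_add,
    Finset.sum_range_succ, ← hk, hg, add_zero]
  congr 1
  · refine Finset.sum_congr rfl fun j hj => ?_
    have hjk := Finset.mem_range.1 hj
    rw [hc', hc', if_pos hjk]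
    split_ifs with h
    · rfl
    · rw [show j + 1 = k by omega, hk]
  · refine Finset.sum_congr rfl fun j _ => ?_
    rw [hc', hc', if_neg (by omega), if_neg (by omega)]
    ring_nf

lemma inc_self {E : Type*} [AddCommGroup E] (X : ℝ → E) (u : ℝ) : inc X u u = 0 := sub_self _

section Variation

variable {E : Type*} [NormedAddCommGroup E] {ρ : ℝ} {A : ℝ → ℝ → E} {s t : ℝ}

lemma sSup_pVarSums_nonneg : 0 ≤ sSup (pVarSums ρ A s t) :=
  Real.sSup_nonneg <| by
    rintro _ ⟨P, rfl⟩
    exact Finset.sum_nonneg fun _ _ => Real.rpow_nonneg (norm_nonneg _) _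

lemma pVar_rpow (hρ : ρ ≠ 0) : pVar ρ A s t ^ ρ = sSup (pVarSums ρ A s t) := by
  rw [pVar, ← Real.rpow_mul sSup_pVarSums_nonneg, one_div, inv_mul_cancel₀ hρ, Real.rpow_one]

lemma pVar_nonneg : 0 ≤ pVar ρ A s t := Real.rpow_nonneg sSup_pVarSums_nonneg _

/-- Degenerate steps contribute `‖A u u‖ ^ ρ = 0` and are dropped one at a time. -/
lemma sum_le_sSup_pVarSums_of_monotone (hρ : ρ ≠ 0) (hA : ∀ u, A u u = 0)
    (hbdd : HasBddPVar ρ A s t) {M : ℕ} {c : ℕ → ℝ} (hc0 : c 0 = s) (hcM : c M = t)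
    (hc : ∀ k < M, c k ≤ c (k + 1)) :
    ∑ k ∈ Finset.range M, ‖A (c k) (c (k + 1))‖ ^ ρ ≤ sSup (pVarSums ρ A s t) := by
  induction M using Nat.strong_induction_on generalizing c with
  | _ M ih =>
  by_cases hstrict : ∀ k < M, c k < c (k + 1)
  · rcases M.eq_zero_or_pos with rfl | hM
    · simpa using sSup_pVarSums_nonneg
    · exact le_csSup hbdd ⟨⟨M, c, hM, hc0, hcM, hstrict⟩, rfl⟩
  · obtain ⟨k, hkM, hk⟩ : ∃ k < M, c (k + 1) ≤ c k := by simpa using hstrict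
    have hk : c k = c (k + 1) := le_antisymm (hc k hkM) hk
    rw [← sum_range_pred_eq_of_step_eq (g := fun x y => ‖A x y‖ ^ ρ) (by simp [hA, hρ]) hkM hk
      (fun _ => rfl)]
    refine ih (M - 1) (by omega) ?_ ?_ fun j hj => ?_
    · rcases k.eq_zero_or_pos with rfl | hk0
      · simpa [← hk]
      · simpa [hk0]
    · simpa [show ¬ M - 1 < k by omega, show M - 1 + 1 = M by omega]
    · split_ifs
      · exact hc j (by omega)
      · obtain rfl : k = j + 1 := by omega
        exact (hc j (by omega)).trans_eq hk
      · exact le_rfl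
      · exact hc (j + 1) (by omega)

lemma sum_le_sSup_pVarSums_of_interlaced (hρ : ρ ≠ 0) (hA : ∀ u, A u u = 0)
    (hbdd : HasBddPVar ρ A s t) {M : ℕ} {c x : ℕ → ℝ} (hc0 : c 0 = s) (hcM : c M = t)
    (hcx : ∀ k < M, c k ≤ x k) (hxc : ∀ k < M, x k ≤ c (k + 1)) :
    ∑ k ∈ Finset.range M, ‖A (c k) (x k)‖ ^ ρ ≤ sSup (pVarSums ρ A s t) := by
  set e : ℕ → ℝ := fun j => if Even j then c (j / 2) else x (j / 2)
  have he_even (k : ℕ) : e (2 * k) = c k := by simp [e]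
  have he_odd (k : ℕ) : e (2 * k + 1) = x k := by
    simp [e, Nat.not_even_bit1, show (2 * k + 1) / 2 = k by omega]
  have hsum (n : ℕ) : ∑ k ∈ Finset.range n, ‖A (c k) (x k)‖ ^ ρ
      ≤ ∑ j ∈ Finset.range (2 * n), ‖A (e j) (e (j + 1))‖ ^ ρ := by
    induction n with
    | zero => simp
    | succ n ih =>
      rw [Finset.sum_range_succ, show 2 * (n + 1) = 2 * n + 1 + 1 by ring,
        Finset.sum_range_succ, Finset.sum_range_succ, he_even, he_odd, add_assoc]
      gcongr
      exact le_add_of_nonneg_right (Real.rpow_nonneg (norm_nonneg _) _)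
  refine (hsum M).trans <|
    sum_le_sSup_pVarSums_of_monotone hρ hA hbdd (by simpa [hc0] using he_even 0)
      (by rw [he_even, hcM]) fun j hj => ?_
  obtain ⟨k, rfl | rfl⟩ := Nat.even_or_odd' j
  · rw [he_even, he_odd]; exact hcx k (by omega)
  · rw [he_odd, show 2 * k + 1 + 1 = 2 * (k + 1) by ring, he_even]; exact hxc k (by omega)

end Variation

lemma add_rpow_le_two_rpow_mul {a b r : ℝ} (ha : 0 ≤ a) (hb : 0 ≤ b) (hr : 0 ≤ r) :
    (a + b) ^ r ≤ 2 ^ r * (a ^ r + b ^ r) := calc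
  (a + b) ^ r ≤ (2 * max a b) ^ r := by rw [two_mul]; gcongr <;> simp
  _ = 2 ^ r * max a b ^ r := Real.mul_rpow zero_le_two (ha.trans (le_max_left a b))
  _ ≤ 2 ^ r * (a ^ r + b ^ r) := by
    gcongr
    rcases le_total a b with h | h
    · simpa [max_eq_right h] using Real.rpow_nonneg ha r
    · simpa [max_eq_left h] using Real.rpow_nonneg hb r

/-- A Young inequality for `1 / r = 1 / p + 1 / q`, with the weights `r / p, r / q ≤ 1` dropped. -/
lemma mul_rpow_le_rpow_add_rpow {p q r : ℝ} (h : p.HolderTriple q r) {a b : ℝ} (ha : 0 ≤ a)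
    (hb : 0 ≤ b) : (a * b) ^ r ≤ a ^ p + b ^ q := by
  have hr := h.pos'
  have young := Real.young_inequality_of_nonneg (Real.rpow_nonneg ha r)
    (Real.rpow_nonneg hb r) h.holderConjugate_div_div
  rw [← Real.rpow_mul ha, ← Real.rpow_mul hb, mul_div_cancel₀ _ hr.ne',
    mul_div_cancel₀ _ hr.ne'] at young
  calc (a * b) ^ r = a ^ r * b ^ r := Real.mul_rpow ha hb
    _ ≤ a ^ p / (p / r) + b ^ q / (q / r) := young
    _ ≤ a ^ p + b ^ q := by
      gcongr
      · exact div_le_self (Real.rpow_nonneg ha p) ((one_le_div hr).2 h.lt.le)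
      · exact div_le_self (Real.rpow_nonneg hb q) ((one_le_div hr).2 h.symm.lt.le)

section Matrix

variable {d : ℕ}

lemma matApply_zero (M : Mat d) : matApply M 0 = 0 := by
  ext i
  simp [matApply, mkVec]

lemma matApply_sub_left (M M' : Mat d) (v : Vec d) :
    matApply (M - M') v = matApply M v - matApply M' v := by
  ext i
  simp [matApply, mkVec, sub_mul, Finset.sum_sub_distrib]

/-- Cauchy–Schwarz row by row. -/
lemma norm_matApply_le (M : Mat d) (v : Vec d) : ‖matApply M v‖ ≤ ‖M‖ * ‖v‖ := by
  rw [EuclideanSpace.norm_eq, EuclideanSpace.norm_eq, EuclideanSpace.norm_eq,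
    ← Real.sqrt_mul (by positivity), Fintype.sum_prod_type, Finset.sum_mul]
  refine Real.sqrt_le_sqrt (Finset.sum_le_sum fun i _ => ?_)
  simpa [matApply, mkVec] using
    Finset.sum_mul_sq_le_sq_mul_sq Finset.univ (fun j => M (i, j)) (fun j => v j)

end Matrix

section DiscretizedRemainder

variable {d : ℕ} {a b : ℝ} (P : IntervalPartition a b) (S F : ℝ → Vec d) (F' : ℝ → Mat d)

/-- The remainder `R^n_{s,t} = F^n_{s,t} - F'_s S^n_{s,t}` of the discretizations along `P`. -/
def discRem : ℝ → ℝ → Vec d :=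
  fun s t => (P.disc F t - P.disc F s) - matApply (F' s) (P.disc S t - P.disc S s)

lemma rem_self (u : ℝ) : rem S F F' u u = 0 := by simp [rem, matApply_zero]

lemma discRem_eq {s t : ℝ} (hs : s ∈ Icc a b) (ht : t ∈ Icc a b) :
    discRem P S F F' s t = rem S F F' (P.floor s) (P.floor t)
      + matApply (F' (P.floor s) - F' s) (S (P.floor t) - S (P.floor s)) := by
  simp only [discRem, rem, P.disc_eq_comp_floor _ hs, P.disc_eq_comp_floor _ ht,
    matApply_sub_left]
  abel

/-- `min s (P.floor t)` is `s` whenever the correction term is present, i.e. when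
`P.floor s < P.floor t`; the `min` keeps these points interlaced with `P.floor` along a
partition. -/
lemma norm_discRem_rpow_le {p q r : ℝ} (h : q.HolderTriple p r) {s t : ℝ} (hs : s ∈ Icc a b)
    (ht : t ∈ Icc a b) (hst : s ≤ t) :
    ‖discRem P S F F' s t‖ ^ r ≤ 2 ^ r * (‖rem S F F' (P.floor s) (P.floor t)‖ ^ r
      + ‖inc F' (P.floor s) (min s (P.floor t))‖ ^ q + ‖inc S (P.floor s) (P.floor t)‖ ^ p) := by
  have hr := h.pos'
  rw [discRem_eq P S F F' hs ht]
  rcases (P.floor_mono hst).eq_or_lt with heq | hlt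
  · rw [heq, sub_self, matApply_zero, add_zero, add_assoc]
    calc ‖rem S F F' (P.floor t) (P.floor t)‖ ^ r
        ≤ 2 ^ r * ‖rem S F F' (P.floor t) (P.floor t)‖ ^ r :=
          le_mul_of_one_le_left (by positivity) (Real.one_le_rpow one_le_two hr.le)
      _ ≤ _ := by gcongr; exact le_add_of_nonneg_right (by positivity)
  · rw [min_eq_left (P.lt_floor_of_floor_lt hlt).le, add_assoc]
    calc _ ≤ (‖rem S F F' (P.floor s) (P.floor t)‖
          + ‖inc F' (P.floor s) s‖ * ‖inc S (P.floor s) (P.floor t)‖) ^ r := by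
          gcongr
          refine (norm_add_le _ _).trans ?_
          gcongr
          simpa only [inc, norm_sub_rev (F' s)] using norm_matApply_le _ _
      _ ≤ _ := (add_rpow_le_two_rpow_mul (by positivity) (by positivity) hr.le).trans
          (by gcongr; exact mul_rpow_le_rpow_add_rpow h (norm_nonneg _) (norm_nonneg _))

variable {S F F'}

lemma varSumOn_discRem_le {p q r : ℝ} (h : q.HolderTriple p r)
    (hR : HasBddPVar r (rem S F F') a b) (hF' : HasBddPVar q (inc F') a b)
    (hS : HasBddPVar p (inc S) a b) (Q : IntervalPartition a b) :
    varSumOn r (discRem P S F F') Q ≤ 2 ^ r * (pVar r (rem S F F') a b ^ r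
      + pVar q (inc F') a b ^ q + pVar p (inc S) a b ^ p) := by
  set c : ℕ → ℝ := fun k => P.floor (Q.τ k)
  have hc0 : c 0 = a := by simp only [c, Q.first, P.floor_left]
  have hcN : c Q.N = b := by simp only [c, Q.last, P.floor_right]
  have hc (k : ℕ) (hk : k < Q.N) : c k ≤ c (k + 1) := P.floor_mono (Q.τ_mono k.le_succ hk)
  rw [varSumOn, pVar_rpow h.pos'.ne', pVar_rpow h.left_pos.ne', pVar_rpow h.right_pos.ne']
  calc _ ≤ ∑ k ∈ Finset.range Q.N, 2 ^ r * (‖rem S F F' (c k) (c (k + 1))‖ ^ r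
        + ‖inc F' (c k) (min (Q.τ k) (c (k + 1)))‖ ^ q + ‖inc S (c k) (c (k + 1))‖ ^ p) :=
        Finset.sum_le_sum fun k hk => norm_discRem_rpow_le P S F F' h
          (Q.τ_mem_Icc (Finset.mem_range.1 hk).le) (Q.τ_mem_Icc (Finset.mem_range.1 hk))
          (Q.τ_mono k.le_succ (Finset.mem_range.1 hk))
    _ = 2 ^ r * (∑ k ∈ Finset.range Q.N, ‖rem S F F' (c k) (c (k + 1))‖ ^ r
        + ∑ k ∈ Finset.range Q.N, ‖inc F' (c k) (min (Q.τ k) (c (k + 1)))‖ ^ q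
        + ∑ k ∈ Finset.range Q.N, ‖inc S (c k) (c (k + 1))‖ ^ p) := by
      rw [← Finset.mul_sum, Finset.sum_add_distrib, Finset.sum_add_distrib]
    _ ≤ _ := by
      gcongr
      · exact sum_le_sSup_pVarSums_of_monotone h.pos'.ne' (rem_self S F F') hR hc0 hcN hc
      · exact sum_le_sSup_pVarSums_of_interlaced h.left_pos.ne' (inc_self F') hF' hc0 hcN
          (fun k hk => le_min (P.floor_le (Q.τ_mem_Icc hk.le).1) (hc k hk))
          (fun _ _ => min_le_right _ _)
      · exact sum_le_sSup_pVarSums_of_monotone h.right_pos.ne' (inc_self S) hS hc0 hcN hc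

lemma pVar_discRem_rpow_le {p q r : ℝ} (h : q.HolderTriple p r)
    (hR : HasBddPVar r (rem S F F') a b) (hF' : HasBddPVar q (inc F') a b)
    (hS : HasBddPVar p (inc S) a b) :
    pVar r (discRem P S F F') a b ^ r ≤ 2 ^ r * (pVar r (rem S F F') a b ^ r
      + pVar q (inc F') a b ^ q + pVar p (inc S) a b ^ p) := by
  have := pVar_nonneg (ρ := r) (A := rem S F F') (s := a) (t := b)
  have := pVar_nonneg (ρ := q) (A := inc F') (s := a) (t := b)
  have := pVar_nonneg (ρ := p) (A := inc S) (s := a) (t := b)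
  rw [pVar_rpow h.pos'.ne']
  refine Real.sSup_le ?_ (by positivity)
  rintro _ ⟨Q, rfl⟩
  exact varSumOn_discRem_le P h hR hF' hS Q

end DiscretizedRemainder

theorem discretized_remainder_uniform_bound_general
    (p q r : ℝ) (hp : 2 < p) (hq : p ≤ q)
    (hr : 1 / r = 1 / p + 1 / q) :
    ∃ C : ℝ, 0 < C ∧
      ∀ (d : ℕ) (T : ℝ), 0 < T →
      ∀ (S F : ℝ → Vec d) (F' : ℝ → Mat d),
        CadlagOn S 0 T → HasBddPVar p (inc S) 0 T →
        IsControlledPath d p q r T S F F' →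
        ∀ P : ℕ → IntervalPartition (0 : ℝ) T, ∀ n : ℕ,
          (∀ Q : IntervalPartition (0 : ℝ) T,
            varSumOn r
              (fun s t => ((P n).disc F t - (P n).disc F s)
                              - matApply (F' s) ((P n).disc S t - (P n).disc S s)) Q
              ≤ C * (pVar r (rem S F F') 0 T ^ r + pVar q (inc F') 0 T ^ q
                      + pVar p (inc S) 0 T ^ p)) ∧
          pVar r
              (fun s t => ((P n).disc F t - (P n).disc F s)
                              - matApply (F' s) ((P n).disc S t - (P n).disc S s)) 0 T ^ r
            ≤ C * (pVar r (rem S F F') 0 T ^ r + pVar q (inc F') 0 T ^ q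
                    + pVar p (inc S) 0 T ^ p) := by
  have h : q.HolderTriple p r :=
    ⟨by simpa only [one_div, add_comm] using hr.symm, by linarith, by linarith⟩
  refine ⟨2 ^ r, by positivity, fun d T _ S F F' _ hS hF P n => ?_⟩
  exact ⟨varSumOn_discRem_le (P n) h hF.varR hF.varF' hS,
    pVar_discRem_rpow_le (P n) h hF.varR hF.varF' hS⟩

/-- **Uniform `r`-variation bound on the discretized remainders** (from the proof of
Theorem 2.?).  For `(F,F') ∈ 𝒱^{q,r}_S` and partitions `P^n` of `[0,T]`, the remainders
`R^n_{s,t} := F^n_{s,t} − F'_s S^n_{s,t}` of the discretizations satisfy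
`Σ_{[s,t] ∈ P} |R^n_{s,t}|^r ≤ C(‖R‖_r^r + ‖F'‖_q^q + ‖S‖_p^p)` for every partition `P`
of `[0,T]`, with `C` depending only on `p, q, r`; in particular `‖R^n‖_{r,[0,T]}` is
bounded uniformly in `n`. -/
theorem discretized_remainder_uniform_bound
    (p q r : ℝ) (hp : 2 < p) (hp' : p < 3) (hq : p ≤ q) (hpq : 2 / p + 1 / q > 1)
    (hr : 1 / r = 1 / p + 1 / q) :
    ∃ C : ℝ, 0 < C ∧
      ∀ (d : ℕ) (T : ℝ), 0 < T →
      ∀ (S F : ℝ → Vec d) (F' : ℝ → Mat d),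
        CadlagOn S 0 T → HasBddPVar p (inc S) 0 T →
        IsControlledPath d p q r T S F F' →
        ∀ P : ℕ → IntervalPartition (0 : ℝ) T, ∀ n : ℕ,
          (∀ Q : IntervalPartition (0 : ℝ) T,
            varSumOn r
              (fun s t => ((P n).disc F t - (P n).disc F s)
                              - matApply (F' s) ((P n).disc S t - (P n).disc S s)) Q
              ≤ C * (pVar r (rem S F F') 0 T ^ r + pVar q (inc F') 0 T ^ q
                      + pVar p (inc S) 0 T ^ p)) ∧
          pVar r
              (fun s t => ((P n).disc F t - (P n).disc F s)
                              - matApply (F' s) ((P n).disc S t - (P n).disc S s)) 0 T ^ r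
            ≤ C * (pVar r (rem S F F') 0 T ^ r + pVar q (inc F') 0 T ^ q
                    + pVar p (inc S) 0 T ^ p) :=
  discretized_remainder_uniform_bound_general p q r hp hq hr
end
end
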